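/- For every n ≥ 0, the adjoining singular word v_{n-1} is not a factor of the singular word w_n. -/

import Mathlib

/-!
If `d (n+1) ≥ 2`, then `v (n-1)` is simply longer than `w n`. If `d (n+1) = 1`, write
`s (n-1) = u ++ [c]`, so that `v (n-1) = !c :: u`. Since `s n = s (n-1)^(d n) ++ s (n-2)` and
`(s (n-2)).dropLast` is a prefix of `u`, the word `w n` is a prefix of a power of the conjugate
`t = c :: u` of `s (n-1)`. A factor of a power of `t` that has the length of `t` is a rotation
of `t`, so it contains as many letters `c` as `t`; but `!c :: u` contains one fewer.
-/

/-- Letters: `a` is `false`, `b` is `true`. -/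
abbrev Word := List Bool

def wpow (w : Word) (k : ℕ) : Word := (List.replicate k w).flatten

@[simp]
lemma wpow_zero (w : Word) : wpow w 0 = [] := rfl

lemma wpow_succ (w : Word) (k : ℕ) : wpow w (k + 1) = wpow w k ++ w := by
  simp [wpow, List.replicate_succ']

lemma wpow_succ' (w : Word) (k : ℕ) : wpow w (k + 1) = w ++ wpow w k := by
  simp [wpow, List.replicate_succ]

@[simp]
lemma length_wpow (w : Word) (k : ℕ) : (wpow w k).length = k * w.length := by
  simp [wpow]

lemma append_wpow_append (x y : Word) (k : ℕ) : x ++ wpow (y ++ x) k = wpow (x ++ y) k ++ x := by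
  induction k with
  | zero => simp
  | succ k ih => simp only [wpow_succ, ← List.append_assoc, ih]

lemma take_drop_wpow_eq_rotate (t : Word) (k i : ℕ) (h : i + t.length ≤ (wpow t k).length) :
    ((wpow t k).drop i).take t.length = t.rotate i := by
  induction k generalizing i with
  | zero =>
    obtain ⟨rfl, rfl⟩ : i = 0 ∧ t = [] := by simpa using h
    rfl
  | succ k ih =>
    rw [length_wpow] at h
    rw [wpow_succ']
    by_cases hi : t.length ≤ i
    · obtain ⟨j, rfl⟩ := Nat.exists_eq_add_of_le hi
      rw [List.drop_append, List.drop_eq_nil_of_le hi, List.nil_append, Nat.add_sub_cancel_left,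
        ih j (by rw [length_wpow]; linarith), ← List.rotate_rotate, List.rotate_length]
    · have hW : (wpow t k).take i = t.take i := by
        rw [← List.take_append_of_le_length (l₂ := t) (by rw [length_wpow]; nlinarith),
          ← wpow_succ, wpow_succ', List.take_append_of_le_length (by omega)]
      rw [List.drop_append_of_le_length (by omega), List.take_append,
        List.take_of_length_le (by simp), List.length_drop, Nat.sub_sub_self (by omega), hW,
        List.rotate_eq_drop_append_take (by omega)]

lemma isRotated_of_infix_wpow {t x : Word} {k : ℕ} (h : x <:+: wpow t k)
    (hlen : x.length = t.length) : t ~r x := by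
  obtain ⟨p, q, hpq⟩ := h
  refine ⟨p.length, ?_⟩
  rw [← take_drop_wpow_eq_rotate t k p.length (by rw [← hpq]; simp [hlen]), ← hpq,
    List.append_assoc, List.drop_left, ← hlen, List.take_left]

lemma not_cons_not_infix_wpow (c : Bool) (u : Word) (k : ℕ) :
    ¬ ((!c) :: u) <:+: wpow (c :: u) k := by
  intro h
  have := (isRotated_of_infix_wpow h rfl).perm.count_eq c
  simp [List.count_cons_self] at this

structure IsStandardSeq (d : ℤ → ℕ) (s : ℤ → Word) : Prop where
  neg_one : s (-1) = [true]
  zero : s 0 = [false]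
  recursion : ∀ n : ℤ, 1 ≤ n → s n = wpow (s (n - 1)) (d n) ++ s (n - 2)

def singularWord (s : ℤ → Word) (n : ℤ) : Word :=
  (if Odd n then [false] else [true]) ++ (s n).dropLast

def adjoiningWord (d : ℤ → ℕ) (s : ℤ → Word) (n : ℤ) : Word :=
  (if Odd n then [false] else [true]) ++ (wpow (s (n + 1)) (d (n + 2) - 1) ++ s n).dropLast

lemma ite_odd_eq_singleton (n : ℤ) :
    (if Odd n then [false] else [true] : Word) = [!decide (Odd n)] := by
  split_ifs <;> simp_all

namespace IsStandardSeq

variable {d : ℤ → ℕ} {s : ℤ → Word}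

lemma eq_dropLast_append (hs : IsStandardSeq d s) {m : ℤ} (hm : -1 ≤ m) :
    s m = (s m).dropLast ++ [decide (Odd m)] := by
  let P : ℤ → Prop := fun m => ∃ u, s m = u ++ [decide (Odd m)]
  suffices P m by obtain ⟨u, hu⟩ := this; rw [hu, List.dropLast_concat]
  have hpair : P m ∧ P (m + 1) := by
    induction m, hm using Int.leInduction with
    | base => exact ⟨⟨[], by simp [hs.neg_one]⟩, ⟨[], by simp [hs.zero]⟩⟩
    | succ m hm ih =>
      refine ⟨ih.2, ?_⟩
      obtain ⟨u, hu⟩ := ih.1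
      refine ⟨wpow (s (m + 1)) (d (m + 2)) ++ u, ?_⟩
      rw [show m + 1 + 1 = m + 2 by ring, hs.recursion (m + 2) (by omega),
        show m + 2 - 1 = m + 1 by ring, show m + 2 - 2 = m by ring, hu]
      simp [parity_simps]
  exact hpair.1

lemma ne_nil (hs : IsStandardSeq d s) {m : ℤ} (hm : -1 ≤ m) : s m ≠ [] := by
  rw [hs.eq_dropLast_append hm]
  simp

lemma dropLast_prefix_dropLast (hs : IsStandardSeq d s) (hd : ∀ n : ℤ, 1 ≤ n → 1 ≤ d n)
    {m : ℤ} (hm : 0 ≤ m) : (s (m - 1)).dropLast <+: (s m).dropLast := by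
  rcases hm.eq_or_lt with rfl | hm
  · simp [hs.neg_one, hs.zero]
  have hsm : s m = s (m - 1) ++ (wpow (s (m - 1)) (d m - 1) ++ s (m - 2)) := by
    rw [hs.recursion m hm, ← List.append_assoc, ← wpow_succ', Nat.sub_add_cancel (hd m hm)]
  rw [hsm, List.dropLast_append_of_ne_nil (by simp [hs.ne_nil (m := m - 2) (by omega)])]
  exact (List.dropLast_prefix _).trans (List.prefix_append _ _)

lemma singularWord_prefix_wpow (hs : IsStandardSeq d s) (hd : ∀ n : ℤ, 1 ≤ n → 1 ≤ d n)
    {n : ℤ} (hn : 0 ≤ n) :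
    ∃ k, singularWord s n <+: wpow (decide (Odd (n - 1)) :: (s (n - 1)).dropLast) k := by
  rcases hn.eq_or_lt with rfl | hn
  · exact ⟨1, by simp [singularWord, hs.zero, wpow]⟩
  set c := decide (Odd (n - 1))
  set u := (s (n - 1)).dropLast
  have hfirst : (if Odd n then [false] else [true] : Word) = [c] := by
    rw [ite_odd_eq_singleton]
    simp [c, parity_simps, ← Int.not_even_iff_odd]
  have htail : [c] ++ (s (n - 2)).dropLast <+: c :: u := by
    have h := hs.dropLast_prefix_dropLast hd (m := n - 1) (by omega)
    rw [show n - 1 - 1 = n - 2 by ring] at h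
    exact (List.prefix_append_right_inj [c]).2 h
  have hsplit : singularWord s n = wpow (c :: u) (d n) ++ ([c] ++ (s (n - 2)).dropLast) := by
    rw [singularWord, hfirst, hs.recursion n hn, hs.eq_dropLast_append (m := n - 1) (by omega),
      List.dropLast_append_of_ne_nil (hs.ne_nil (by omega)), ← List.append_assoc,
      append_wpow_append, List.append_assoc]
    rfl
  refine ⟨d n + 1, ?_⟩
  rw [hsplit, wpow_succ]
  exact (List.prefix_append_right_inj _).2 htail

lemma length_singularWord_lt (hs : IsStandardSeq d s) {n : ℤ} (hn : 0 ≤ n)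
    (hdn : 2 ≤ d (n + 1)) : (singularWord s n).length < (adjoiningWord d s (n - 1)).length := by
  have hsn := List.length_pos_iff.mpr (hs.ne_nil (m := n) (by omega))
  have hsn1 := List.length_pos_iff.mpr (hs.ne_nil (m := n - 1) (by omega))
  rw [singularWord, adjoiningWord, sub_add_cancel, show n - 1 + 2 = n + 1 by ring,
    ite_odd_eq_singleton, ite_odd_eq_singleton]
  simp only [List.length_append, List.length_singleton, List.length_dropLast, length_wpow]
  have : (s n).length ≤ (d (n + 1) - 1) * (s n).length := Nat.le_mul_of_pos_left _ (by omega)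
  omega

end IsStandardSeq

lemma adjoiningWord_pred_of_le_one {d : ℤ → ℕ} {s : ℤ → Word} {n : ℤ}
    (hdn : d (n + 1) ≤ 1) :
    adjoiningWord d s (n - 1) = (!decide (Odd (n - 1))) :: (s (n - 1)).dropLast := by
  rw [adjoiningWord, sub_add_cancel, show n - 1 + 2 = n + 1 by ring, Nat.sub_eq_zero_of_le hdn,
    wpow_zero, List.nil_append, ite_odd_eq_singleton, List.singleton_append]

theorem adjoining_singular_word_not_factor_general (d : ℤ → ℕ) (s : ℤ → Word)
    (hd : ∀ n : ℤ, 1 ≤ n → 1 ≤ d n)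
    (hs1 : s (-1) = [true]) (hs0 : s 0 = [false])
    (hs : ∀ n : ℤ, 1 ≤ n → s n = wpow (s (n - 1)) (d n) ++ s (n - 2))
    (w : ℤ → Word)
    (hw : ∀ n : ℤ, 0 ≤ n → w n = (if Odd n then [false] else [true]) ++ (s n).dropLast)
    (v : ℤ → Word)
    (hv : ∀ n : ℤ, -1 ≤ n → v n = (if Odd n then [false] else [true]) ++ (wpow (s (n + 1)) (d (n + 2) - 1) ++ s n).dropLast) :
    ∀ n : ℤ, 0 ≤ n → ¬ (v (n - 1) <:+: w n) := by
  intro n hn hfactor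
  have hseq : IsStandardSeq d s := ⟨hs1, hs0, hs⟩
  have hwn : w n = singularWord s n := hw n hn
  have hvn : v (n - 1) = adjoiningWord d s (n - 1) := hv (n - 1) (by omega)
  rw [hwn, hvn] at hfactor
  rcases le_or_gt (d (n + 1)) 1 with hdn | hdn
  · obtain ⟨k, hk⟩ := hseq.singularWord_prefix_wpow hd hn
    rw [adjoiningWord_pred_of_le_one hdn] at hfactor
    exact not_cons_not_infix_wpow _ _ k (hfactor.trans hk.isInfix)
  · exact (hseq.length_singularWord_lt hn hdn).not_ge hfactor.length_le

/-- For every `n ≥ 0`, the adjoining singular word `vₙ₋₁` is not a factor of `wₙ`. -/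
theorem adjoining_singular_word_not_factor (d : ℤ → ℕ) (s : ℤ → Word)
    (hd : ∀ n : ℤ, 1 ≤ n → 1 ≤ d n)
    (hs1 : s (-1) = [true]) (hs0 : s 0 = [false])
    (hs : ∀ n : ℤ, 1 ≤ n → s n = wpow (s (n - 1)) (d n) ++ s (n - 2))
    (w : ℤ → Word)
    (hw : ∀ n : ℤ, 0 ≤ n → w n = (if Odd n then [false] else [true]) ++ (s n).dropLast)
    (hwm1 : w (-1) = [false]) (hwm2 : w (-2) = [])
    (v : ℤ → Word)
    (hv : ∀ n : ℤ, -1 ≤ n → v n = (if Odd n then [false] else [true]) ++ (wpow (s (n + 1)) (d (n + 2) - 1) ++ s n).dropLast)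
    (hvm2 : v (-2) = []) :
    ∀ n : ℤ, 0 ≤ n → ¬ (v (n - 1) <:+: w n) :=
  adjoining_singular_word_not_factor_general d s hd hs1 hs0 hs w hw v hv
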